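/- arXiv:2106.07760 — 4 statements merged into one kernel-verified Lean document; each statement's English description precedes it below -/
import Mathlib

section
/- Let H : [1,C] → ℝ_{≥0} with all H_c ≥ 0, not all zero, and let g : V × [1,C] → ℝ with ĝ_{ec} ≥ ĝ_min ≥ 0 for all e, c, where ĝ_min = min over all e,c of ĝ_{ec}. Define f₂(S) = −log( Σ_{c=1}^C H_c · exp(−λ Σ_{j∈S} ĝ_{jc}) ) for λ > 0. Then for any set X ⊆ V and element e ∉ X, the marginal gain satisfies f₂(e|X) ≥ λ · ĝ_min. -/
open Finset Real

theorem log_sum_mul_exp_le_log_sum_mul_exp_add {ι : Type*} (s : Finset ι) {w a b : ι → ℝ}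
    {d : ℝ} (hw : ∀ i ∈ s, 0 ≤ w i) (hw_pos : ∃ i ∈ s, 0 < w i)
    (hab : ∀ i ∈ s, a i ≤ b i + d) :
    log (∑ i ∈ s, w i * exp (a i)) ≤ log (∑ i ∈ s, w i * exp (b i)) + d := by
  have sum_pos : ∀ x : ι → ℝ, 0 < ∑ i ∈ s, w i * exp (x i) := fun x =>
    sum_pos' (fun i hi => mul_nonneg (hw i hi) (exp_pos _).le)
      (hw_pos.imp fun i ⟨hi, hwi⟩ => ⟨hi, mul_pos hwi (exp_pos _)⟩)
  have sum_le : ∑ i ∈ s, w i * exp (a i) ≤ exp d * ∑ i ∈ s, w i * exp (b i) := by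
    rw [mul_sum]
    refine sum_le_sum fun i hi => ?_
    calc w i * exp (a i) ≤ w i * exp (b i + d) :=
          mul_le_mul_of_nonneg_left (exp_le_exp.2 (hab i hi)) (hw i hi)
      _ = exp d * (w i * exp (b i)) := by rw [exp_add]; ring
  calc log (∑ i ∈ s, w i * exp (a i))
      ≤ log (exp d * ∑ i ∈ s, w i * exp (b i)) := log_le_log (sum_pos a) sum_le
    _ = log (∑ i ∈ s, w i * exp (b i)) + d := by
      rw [log_mul (exp_ne_zero _) (sum_pos b).ne', log_exp, add_comm]

open Real in
theorem retrieve_gain_lower_bound_general {V : Type*} [DecidableEq V]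
    (C : ℕ) (H : Fin C → ℝ) (hH : ∀ c, 0 ≤ H c)
    (hHne : ∃ c, 0 < H c)
    (g : V → Fin C → ℝ) (gmin lam : ℝ) (hlam : 0 < lam)
    (hgmin : ∀ e c, gmin ≤ g e c)
    (f₂ : Finset V → ℝ)
    (hf₂ : ∀ S : Finset V,
      f₂ S = -Real.log (∑ c, H c * Real.exp (-lam * ∑ j ∈ S, g j c))) :
    ∀ (X : Finset V) (e : V), e ∉ X →
      f₂ (insert e X) - f₂ X ≥ lam * gmin := by
  intro X e he
  have exponent_le : ∀ c ∈ univ, -lam * ∑ j ∈ insert e X, g j c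
      ≤ -lam * ∑ j ∈ X, g j c + -(lam * gmin) := fun c _ => by
    rw [sum_insert he]
    linarith [mul_le_mul_of_nonneg_left (hgmin e c) hlam.le]
  have log_le := log_sum_mul_exp_le_log_sum_mul_exp_add univ (fun c _ => hH c)
    (hHne.imp fun c hc => ⟨mem_univ c, hc⟩) exponent_le
  rw [hf₂, hf₂]
  linarith

open Real in
/-- Lower bound on the marginal gain of the RETRIEVE set function `f₂`. -/
theorem retrieve_gain_lower_bound {V : Type*} [DecidableEq V]
    (C : ℕ) (hC : 1 ≤ C) (H : Fin C → ℝ) (hH : ∀ c, 0 ≤ H c)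
    (hHne : ∃ c, 0 < H c)
    (g : V → Fin C → ℝ) (gmin lam : ℝ) (hlam : 0 < lam)
    (hgmin0 : 0 ≤ gmin) (hgmin : ∀ e c, gmin ≤ g e c)
    (f₂ : Finset V → ℝ)
    (hf₂ : ∀ S : Finset V,
      f₂ S = -Real.log (∑ c, H c * Real.exp (-lam * ∑ j ∈ S, g j c))) :
    ∀ (X : Finset V) (e : V), e ∉ X →
      f₂ (insert e X) - f₂ X ≥ lam * gmin :=
  retrieve_gain_lower_bound_general C H hH hHne g gmin lam hlam hgmin f₂ hf₂
end

section
/- Let f₂(S) = −log( Σ_{c=1}^C H_c · exp(−λ Σ_{j∈S} ĝ_{jc}) ) with H_c ≥ 0 not all zero, λ > 0, and suppose 1 ≤ ĝ_{jc} ≤ G for all j ∈ V, c ∈ [1,C], where G ≥ 1. Then f₂ is α-submodular with α = 1 − 1/G; i.e., for all X ⊆ Y ⊆ V and e ∉ Y, f₂(e|X) ≥ (1/G) f₂(e|Y). -/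
/-!
Write `A(S) = ∑_c H_c exp(-λ ∑_{j ∈ S} ĝ_{jc})`, so that `f₂(e|S) = log A(S) - log A(S ∪ {e})`.
Adding `e` multiplies every summand of `A` by `exp(-λ ĝ_{ec}) ∈ [exp(-λG), exp(-λ)]`, hence
`λ ≤ f₂(e|S) ≤ λG` for every `S ∌ e`, and so `f₂(e|X) ≥ λ ≥ f₂(e|Y) / G`.
-/

open Real Finset

lemma sum_mul_exp_pos {ι : Type*} [Fintype ι] {w : ι → ℝ} (hw : ∀ i, 0 ≤ w i)
    (hpos : ∃ i, 0 < w i) (x : ι → ℝ) : 0 < ∑ i, w i * exp (x i) := by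
  obtain ⟨i₀, hi₀⟩ := hpos
  exact sum_pos' (fun i _ => mul_nonneg (hw i) (exp_pos _).le)
    ⟨i₀, mem_univ _, mul_pos hi₀ (exp_pos _)⟩

lemma log_sum_mul_exp_le_of_le_add {ι : Type*} [Fintype ι] {w x y : ι → ℝ} (d : ℝ)
    (hw : ∀ i, 0 ≤ w i) (hpos : ∃ i, 0 < w i) (hxy : ∀ i, x i ≤ y i + d) :
    log (∑ i, w i * exp (x i)) ≤ log (∑ i, w i * exp (y i)) + d := by
  have hy := sum_mul_exp_pos hw hpos y
  have hsum : ∑ i, w i * exp (x i) ≤ exp d * ∑ i, w i * exp (y i) := by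
    rw [mul_sum]
    refine sum_le_sum fun i _ => ?_
    calc w i * exp (x i) ≤ w i * exp (y i + d) := by gcongr; exacts [hw i, hxy i]
      _ = exp d * (w i * exp (y i)) := by rw [exp_add]; ring
  calc log (∑ i, w i * exp (x i)) ≤ log (exp d * ∑ i, w i * exp (y i)) :=
        log_le_log (sum_mul_exp_pos hw hpos x) hsum
    _ = log (∑ i, w i * exp (y i)) + d := by
        rw [log_mul (exp_ne_zero d) hy.ne', log_exp, add_comm]

section MarginalGain

variable {ι V : Type*} [Fintype ι] [DecidableEq V] {H : ι → ℝ} {g : V → ι → ℝ} {lam : ℝ}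
  {S : Finset V} {e : V}

lemma le_log_sum_sub_log_sum_insert (hH : ∀ c, 0 ≤ H c) (hHne : ∃ c, 0 < H c)
    (hlam : 0 ≤ lam) (hg : ∀ c, 1 ≤ g e c) (he : e ∉ S) :
    lam ≤ log (∑ c, H c * exp (-lam * ∑ j ∈ S, g j c))
      - log (∑ c, H c * exp (-lam * ∑ j ∈ insert e S, g j c)) := by
  have := log_sum_mul_exp_le_of_le_add (-lam) hH hHne
    (x := fun c => -lam * ∑ j ∈ insert e S, g j c) (y := fun c => -lam * ∑ j ∈ S, g j c)
    fun c => by simp only [sum_insert he]; nlinarith [hg c]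
  linarith

lemma log_sum_sub_log_sum_insert_le {G : ℝ} (hH : ∀ c, 0 ≤ H c) (hHne : ∃ c, 0 < H c)
    (hlam : 0 ≤ lam) (hg : ∀ c, g e c ≤ G) (he : e ∉ S) :
    log (∑ c, H c * exp (-lam * ∑ j ∈ S, g j c))
      - log (∑ c, H c * exp (-lam * ∑ j ∈ insert e S, g j c)) ≤ lam * G := by
  have := log_sum_mul_exp_le_of_le_add (lam * G) hH hHne
    (x := fun c => -lam * ∑ j ∈ S, g j c) (y := fun c => -lam * ∑ j ∈ insert e S, g j c)
    fun c => by simp only [sum_insert he]; nlinarith [hg c]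
  linarith

end MarginalGain

theorem retrieve_alpha_submodular_general {V : Type*} [DecidableEq V]
    (C : ℕ) (H : Fin C → ℝ) (hH : ∀ c, 0 ≤ H c)
    (hHne : ∃ c, 0 < H c)
    (g : V → Fin C → ℝ) (G lam : ℝ) (hlam : 0 < lam) (hG : 1 ≤ G)
    (hg1 : ∀ j c, 1 ≤ g j c) (hgG : ∀ j c, g j c ≤ G)
    (f₂ : Finset V → ℝ)
    (hf₂ : ∀ S : Finset V,
      f₂ S = -Real.log (∑ c, H c * Real.exp (-lam * ∑ j ∈ S, g j c))) :
    ∀ (X Y : Finset V) (e : V), X ⊆ Y → e ∉ Y →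
      f₂ (insert e X) - f₂ X ≥ (1 / G) * (f₂ (insert e Y) - f₂ Y) := by
  intro X Y e hXY heY
  have hX : lam ≤ f₂ (insert e X) - f₂ X := by
    rw [hf₂, hf₂, neg_sub_neg]
    exact le_log_sum_sub_log_sum_insert hH hHne hlam.le (hg1 e) fun h => heY (hXY h)
  have hY : f₂ (insert e Y) - f₂ Y ≤ lam * G := by
    rw [hf₂, hf₂, neg_sub_neg]
    exact log_sum_sub_log_sum_insert_le hH hHne hlam.le (hgG e) heY
  calc (1 / G) * (f₂ (insert e Y) - f₂ Y) ≤ (1 / G) * (lam * G) := by gcongr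
    _ = lam := by field_simp
    _ ≤ f₂ (insert e X) - f₂ X := hX

/-- The RETRIEVE set function `f₂` with gains `ĝ_{jc} ∈ [1, G]` is
`α`-submodular with `α = 1 - 1/G`. -/
theorem retrieve_alpha_submodular {V : Type*} [DecidableEq V]
    (C : ℕ) (hC : 1 ≤ C) (H : Fin C → ℝ) (hH : ∀ c, 0 ≤ H c)
    (hHne : ∃ c, 0 < H c)
    (g : V → Fin C → ℝ) (G lam : ℝ) (hlam : 0 < lam) (hG : 1 ≤ G)
    (hg1 : ∀ j c, 1 ≤ g j c) (hgG : ∀ j c, g j c ≤ G)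
    (f₂ : Finset V → ℝ)
    (hf₂ : ∀ S : Finset V,
      f₂ S = -Real.log (∑ c, H c * Real.exp (-lam * ∑ j ∈ S, g j c))) :
    ∀ (X Y : Finset V) (e : V), X ⊆ Y → e ∉ Y →
      f₂ (insert e X) - f₂ X ≥ (1 / G) * (f₂ (insert e Y) - f₂ Y) :=
  retrieve_alpha_submodular_general C H hH hHne g G lam hlam hG hg1 hgG f₂ hf₂
end

section
/- Let f be a monotone nondecreasing, α-submodular set function with f(∅) = 0 and α ∈ [0,1). Let S_k be the set produced by the greedy algorithm that adds k elements one at a time, each maximizing marginal gain. Then f(S_k) ≥ (1 − e^{−(1−α)}) · max_{|S| ≤ k} f(S). -/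
/-!
Let `T` be any set with `|T| ≤ k`. By α-submodularity the marginal gains of the elements of `T`
over the current greedy set `S` sum to at least `(1 - α) (f (S ∪ T) - f S) ≥ (1 - α) (f T - f S)`,
so the greedy element gains at least a `(1 - α) / k` fraction of the gap `f T - f S`. The gap
therefore shrinks by a factor `1 - (1 - α) / k` per step, and `(1 - (1 - α) / k) ^ k ≤ e^{-(1 - α)}`.
-/

open Finset

section

variable {V : Type*} [DecidableEq V]

def AlphaSubmodular (α : ℝ) (f : Finset V → ℝ) : Prop :=
  ∀ (X Y : Finset V) (e : V), X ⊆ Y → e ∉ Y →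
    f (insert e X) - f X ≥ (1 - α) * (f (insert e Y) - f Y)

namespace AlphaSubmodular

variable {α : ℝ} {f : Finset V → ℝ}

theorem one_sub_mul_le_sum_marginal (hf : AlphaSubmodular α f) (hmono : Monotone f)
    (A B : Finset V) :
    (1 - α) * (f (A ∪ B) - f A) ≤ ∑ e ∈ B, (f (insert e A) - f A) := by
  induction B using Finset.induction_on with
  | empty => simp
  | insert a B haB ih =>
    rw [sum_insert haB, union_insert]
    have hgain : 0 ≤ f (insert a A) - f A := sub_nonneg.2 (hmono (subset_insert a A))
    by_cases haAB : a ∈ A ∪ B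
    · rw [insert_eq_of_mem haAB]
      linarith
    · linarith [hf A (A ∪ B) a subset_union_left haAB]

theorem gap_greedy_step (hf : AlphaSubmodular α f) (hmono : Monotone f) (hα1 : α ≤ 1)
    {k : ℕ} (hk : 0 < k) {T S : Finset V} (hT : #T ≤ k) {e : V}
    (hmax : ∀ e' : V, f (insert e' S) - f S ≤ f (insert e S) - f S) :
    f T - f (insert e S) ≤ (1 - (1 - α) / k) * (f T - f S) := by
  have hgain : 0 ≤ f (insert e S) - f S := sub_nonneg.2 (hmono (subset_insert e S))
  have hsum : ∑ e' ∈ T, (f (insert e' S) - f S) ≤ k * (f (insert e S) - f S) :=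
    calc ∑ e' ∈ T, (f (insert e' S) - f S) ≤ #T • (f (insert e S) - f S) :=
          sum_le_card_nsmul T _ _ fun e' _ => hmax e'
      _ ≤ k * (f (insert e S) - f S) := by
          rw [nsmul_eq_mul]
          exact mul_le_mul_of_nonneg_right (by exact_mod_cast hT) hgain
  have hkey : (1 - α) * (f T - f S) ≤ k * (f (insert e S) - f S) :=
    calc (1 - α) * (f T - f S) ≤ (1 - α) * (f (S ∪ T) - f S) := by
          gcongr
          exact hmono subset_union_right
      _ ≤ k * (f (insert e S) - f S) := (hf.one_sub_mul_le_sum_marginal hmono S T).trans hsum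
  have hk' : (0 : ℝ) < k := by exact_mod_cast hk
  have hfraction : (1 - α) / k * (f T - f S) ≤ f (insert e S) - f S := by
    rw [div_mul_eq_mul_div, div_le_iff₀ hk']
    linarith
  rw [sub_mul, one_mul]
  linarith

end AlphaSubmodular

end

theorem greedy_alpha_submodular_guarantee_general {V : Type*} [DecidableEq V]
    (f : Finset V → ℝ) (α : ℝ) (hα0 : 0 ≤ α) (hα1 : α < 1)
    (hmono : ∀ X Y : Finset V, X ⊆ Y → f X ≤ f Y)
    (hempty : f ∅ = 0)
    (hα : ∀ (X Y : Finset V) (e : V), X ⊆ Y → e ∉ Y →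
      f (insert e X) - f X ≥ (1 - α) * (f (insert e Y) - f Y))
    (k : ℕ) (S : ℕ → Finset V)
    (hS0 : S 0 = ∅)
    (hgreedy : ∀ i < k, ∃ e : V, S (i + 1) = insert e (S i) ∧
      ∀ e' : V, f (insert e' (S i)) - f (S i) ≤ f (insert e (S i)) - f (S i)) :
    ∀ T : Finset V, T.card ≤ k →
      f (S k) ≥ (1 - Real.exp (-(1 - α))) * f T := by
  intro T hT
  have hf : AlphaSubmodular α f := hα
  have hmono' : Monotone f := fun X Y h => hmono X Y h
  have hfT : 0 ≤ f T := hempty ▸ hmono ∅ T (empty_subset T)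
  obtain rfl | hk := Nat.eq_zero_or_pos k
  · rw [card_eq_zero.mp (Nat.le_zero.mp hT), hS0, hempty, mul_zero]
  have hαk : 1 - α ≤ k := by
    have : (1 : ℝ) ≤ k := by exact_mod_cast hk
    linarith
  have hc : 0 ≤ 1 - (1 - α) / k := sub_nonneg.2 (div_le_one_of_le₀ hαk k.cast_nonneg)
  have hgap : f T - f (S k) ≤ (1 - (1 - α) / k) ^ k * (f T - f (S 0)) :=
    le_geom (u := fun i => f T - f (S i)) hc k fun i hi => by
      obtain ⟨e, hSe, hmax⟩ := hgreedy i hi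
      rw [hSe]
      exact hf.gap_greedy_step hmono' hα1.le hk hT hmax
  rw [hS0, hempty, sub_zero] at hgap
  nlinarith [mul_le_mul_of_nonneg_right (Real.one_sub_div_pow_le_exp_neg hαk) hfT]

/-- Greedy guarantee for monotone `α`-submodular maximization under a
cardinality constraint: `f(S_k) ≥ (1 − e^{−(1−α)}) max_{|S| ≤ k} f S`. -/
theorem greedy_alpha_submodular_guarantee {V : Type*} [DecidableEq V] [Fintype V]
    (f : Finset V → ℝ) (α : ℝ) (hα0 : 0 ≤ α) (hα1 : α < 1)
    (hmono : ∀ X Y : Finset V, X ⊆ Y → f X ≤ f Y)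
    (hempty : f ∅ = 0)
    (hα : ∀ (X Y : Finset V) (e : V), X ⊆ Y → e ∉ Y →
      f (insert e X) - f X ≥ (1 - α) * (f (insert e Y) - f Y))
    (k : ℕ) (S : ℕ → Finset V)
    (hS0 : S 0 = ∅)
    (hgreedy : ∀ i < k, ∃ e : V, S (i + 1) = insert e (S i) ∧
      ∀ e' : V, f (insert e' (S i)) - f (S i) ≤ f (insert e (S i)) - f (S i)) :
    ∀ T : Finset V, T.card ≤ k →
      f (S k) ≥ (1 - Real.exp (-(1 - α))) * f T :=
  greedy_alpha_submodular_guarantee_general f α hα0 hα1 hmono hempty hα k S hS0 hgreedy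
end

section
/- Let f₂(S) = −log( Σ_{c=1}^C H_c exp(−λ Σ_{j∈S} ĝ_{jc}) ) with H_c ≥ 0 not all zero, λ > 0, and 1 ≤ ĝ_{jc} ≤ G for all j, c. Then for any two sets X ⊆ Y and any element e ∉ Y, the ratio of marginal gains satisfies f₂(e|X) / f₂(e|Y) ≥ 1/G (both gains are positive). -/
/-!
Write `f₂ S = F (λ · ∑_{j ∈ S} ĝ_j)`, where `F x = -log ∑_c H_c e^{-x_c}` is a weighted soft
minimum. `F` is monotone and satisfies `F (x + a) = F x + a` for constants `a`, so adding a
vector with entries in `[a, b]` raises `F` by an amount in `[a, b]`. Hence every marginal gain of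
`f₂` lies in `[λ, λ G]`, and the ratio of two of them is at least `λ / (λ G) = 1 / G`.
-/

open Finset

noncomputable def weightedSoftMin {ι : Type*} [Fintype ι] (w x : ι → ℝ) : ℝ :=
  -Real.log (∑ i, w i * Real.exp (-x i))

namespace weightedSoftMin

variable {ι : Type*} [Fintype ι] {w : ι → ℝ}

lemma sum_mul_exp_pos (hw : ∀ i, 0 ≤ w i) (hw' : ∃ i, 0 < w i) (x : ι → ℝ) :
    0 < ∑ i, w i * Real.exp (-x i) := by
  obtain ⟨i, hi⟩ := hw'
  exact sum_pos' (fun j _ => mul_nonneg (hw j) (Real.exp_pos _).le)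
    ⟨i, mem_univ i, mul_pos hi (Real.exp_pos _)⟩

lemma add_const (hw : ∀ i, 0 ≤ w i) (hw' : ∃ i, 0 < w i) (x : ι → ℝ) (a : ℝ) :
    weightedSoftMin w (fun i => x i + a) = weightedSoftMin w x + a := by
  have hsum : ∑ i, w i * Real.exp (-(x i + a)) = (∑ i, w i * Real.exp (-x i)) * Real.exp (-a) := by
    rw [sum_mul]
    refine sum_congr rfl fun i _ => ?_
    rw [neg_add, Real.exp_add, mul_assoc]
  rw [weightedSoftMin, weightedSoftMin, hsum,
    Real.log_mul (sum_mul_exp_pos hw hw' x).ne' (Real.exp_ne_zero _), Real.log_exp]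
  ring

lemma mono (hw : ∀ i, 0 ≤ w i) (hw' : ∃ i, 0 < w i) {x y : ι → ℝ} (hxy : ∀ i, x i ≤ y i) :
    weightedSoftMin w x ≤ weightedSoftMin w y := by
  refine neg_le_neg (Real.log_le_log (sum_mul_exp_pos hw hw' y) (sum_le_sum fun i _ => ?_))
  exact mul_le_mul_of_nonneg_left (Real.exp_le_exp.2 (neg_le_neg (hxy i))) (hw i)

lemma add_sub_mem_Icc (hw : ∀ i, 0 ≤ w i) (hw' : ∃ i, 0 < w i) (x d : ι → ℝ) {a b : ℝ}
    (had : ∀ i, a ≤ d i) (hdb : ∀ i, d i ≤ b) :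
    weightedSoftMin w (fun i => x i + d i) - weightedSoftMin w x ∈ Set.Icc a b := by
  have hlow := mono hw hw' (x := fun i => x i + a) fun i => add_le_add_right (had i) _
  have hupp := mono hw hw' (y := fun i => x i + b) fun i => add_le_add_right (hdb i) _
  rw [add_const hw hw'] at hlow hupp
  constructor <;> linarith

end weightedSoftMin

lemma one_div_le_div_of_mem_Icc {l G p q : ℝ} (hl : 0 < l) (hp : l ≤ p) (hq : q ∈ Set.Icc l (l * G)) :
    1 / G ≤ p / q := by
  have hG : 0 < G := pos_of_mul_pos_right (hl.trans_le (hq.1.trans hq.2)) hl.le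
  calc 1 / G = l / (l * G) := by field_simp
    _ ≤ p / q := div_le_div₀ (hl.le.trans hp) hp (hl.trans_le hq.1) hq.2

theorem retrieve_gain_ratio_general {V : Type*} [DecidableEq V]
    (C : ℕ) (H : Fin C → ℝ) (hH : ∀ c, 0 ≤ H c)
    (hHne : ∃ c, 0 < H c)
    (g : V → Fin C → ℝ) (G lam : ℝ) (hlam : 0 < lam)
    (hg1 : ∀ j c, 1 ≤ g j c) (hgG : ∀ j c, g j c ≤ G)
    (f₂ : Finset V → ℝ)
    (hf₂ : ∀ S : Finset V,
      f₂ S = -Real.log (∑ c, H c * Real.exp (-lam * ∑ j ∈ S, g j c))) :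
    ∀ (X Y : Finset V) (e : V), X ⊆ Y → e ∉ Y →
      0 < f₂ (insert e X) - f₂ X ∧ 0 < f₂ (insert e Y) - f₂ Y ∧
        (f₂ (insert e X) - f₂ X) / (f₂ (insert e Y) - f₂ Y) ≥ 1 / G := by
  intro X Y e hXY heY
  have hf : ∀ S, f₂ S = weightedSoftMin H fun c => lam * ∑ j ∈ S, g j c := by
    simp only [hf₂, weightedSoftMin, neg_mul, implies_true]
  have gain_mem : ∀ S, e ∉ S → f₂ (insert e S) - f₂ S ∈ Set.Icc lam (lam * G) := by
    intro S heS
    simp only [hf, sum_insert heS, mul_add, add_comm (lam * g e _)]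
    exact weightedSoftMin.add_sub_mem_Icc hH hHne _ _
      (fun c => le_mul_of_one_le_right hlam.le (hg1 e c))
      (fun c => mul_le_mul_of_nonneg_left (hgG e c) hlam.le)
  have hX := gain_mem X fun h => heY (hXY h)
  have hY := gain_mem Y heY
  exact ⟨hlam.trans_le hX.1, hlam.trans_le hY.1, one_div_le_div_of_mem_Icc hlam hX.1 hY⟩

/-- Ratio of marginal gains of the RETRIEVE set function `f₂` is at least `1/G`
(both gains are positive). -/
theorem retrieve_gain_ratio {V : Type*} [DecidableEq V]
    (C : ℕ) (hC : 1 ≤ C) (H : Fin C → ℝ) (hH : ∀ c, 0 ≤ H c)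
    (hHne : ∃ c, 0 < H c)
    (g : V → Fin C → ℝ) (G lam : ℝ) (hlam : 0 < lam) (hG : 1 ≤ G)
    (hg1 : ∀ j c, 1 ≤ g j c) (hgG : ∀ j c, g j c ≤ G)
    (f₂ : Finset V → ℝ)
    (hf₂ : ∀ S : Finset V,
      f₂ S = -Real.log (∑ c, H c * Real.exp (-lam * ∑ j ∈ S, g j c))) :
    ∀ (X Y : Finset V) (e : V), X ⊆ Y → e ∉ Y →
      0 < f₂ (insert e X) - f₂ X ∧ 0 < f₂ (insert e Y) - f₂ Y ∧
        (f₂ (insert e X) - f₂ X) / (f₂ (insert e Y) - f₂ Y) ≥ 1 / G :=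
  retrieve_gain_ratio_general C H hH hHne g G lam hlam hg1 hgG f₂ hf₂
end
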